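/- If Φ is an m×M matrix with unit norm columns and coherence μ, then Φ satisfies the Restricted Isometry Property of order k with constant δ_k = (k-1)μ, i.e., for all k-sparse x ∈ R^M, (1-(k-1)μ)‖x‖₂² ≤ ‖Φx‖₂² ≤ (1+(k-1)μ)‖x‖₂². -/

import Mathlib

/-!
Expanding `‖Φx‖²` gives `‖x‖²` (the unit diagonal of the Gram matrix `ΦᵀΦ`) plus an off-diagonal
part whose entries are bounded by `μ`, so the off-diagonal part is at most
`μ ((∑ |xᵢ|)² - ‖x‖²)` in absolute value. For `k`-sparse `x`, Cauchy–Schwarz on the support gives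
`(∑ |xᵢ|)² ≤ k ‖x‖²`, hence `|‖Φx‖² - ‖x‖²| ≤ (k - 1) μ ‖x‖²`.
-/

open Matrix BigOperators Finset
open scoped Classical

noncomputable def coherence {m M : ℕ} (A : Matrix (Fin m) (Fin M) ℝ) : ℝ :=
  sSup {r : ℝ | ∃ i j : Fin M, i ≠ j ∧ r = |∑ k, A k i * A k j|}

lemma coherence_nonneg {m M : ℕ} (A : Matrix (Fin m) (Fin M) ℝ) : 0 ≤ coherence A :=
  Real.sSup_nonneg (by rintro r ⟨i, j, -, rfl⟩; exact abs_nonneg _)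

lemma abs_gram_le_coherence {m M : ℕ} (A : Matrix (Fin m) (Fin M) ℝ) {i j : Fin M}
    (h : i ≠ j) : |(Aᵀ * A) i j| ≤ coherence A := by
  refine le_csSup ?_ ⟨i, j, h, rfl⟩
  refine (Set.finite_range fun p : Fin M × Fin M => |(Aᵀ * A) p.1 p.2|).bddAbove.mono ?_
  rintro r ⟨i, j, -, rfl⟩
  exact ⟨(i, j), rfl⟩

section QuadraticForm

variable {ι κ : Type*} [Fintype ι] [Fintype κ]

lemma sum_mulVec_sq_eq_sum_gram (A : Matrix κ ι ℝ) (x : ι → ℝ) :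
    ∑ l, (A *ᵥ x) l ^ 2 = ∑ i, ∑ j, x i * x j * (Aᵀ * A) i j := by
  simp_rw [sq, mulVec, dotProduct, sum_mul_sum, mul_apply, transpose_apply, mul_sum]
  rw [sum_comm]
  refine sum_congr rfl fun i _ => ?_
  rw [sum_comm]
  exact sum_congr rfl fun j _ => sum_congr rfl fun l _ => by ring

lemma abs_quadForm_sub_sum_sq_le (G : Matrix ι ι ℝ) (x : ι → ℝ) {μ : ℝ}
    (hdiag : ∀ i, G i i = 1) (hoff : ∀ i j, i ≠ j → |G i j| ≤ μ) :
    |∑ i, ∑ j, x i * x j * G i j - ∑ i, x i ^ 2| ≤ μ * ((∑ i, |x i|) ^ 2 - ∑ i, x i ^ 2) := by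
  have hoffDiag : ∑ i, ∑ j, x i * x j * G i j - ∑ i, x i ^ 2
      = ∑ i, ∑ j ∈ univ.erase i, x i * x j * G i j := by
    simp only [sum_erase_eq_sub (mem_univ _), sum_sub_distrib, hdiag, mul_one, sq]
  have habs : (∑ i, |x i|) ^ 2 - ∑ i, x i ^ 2 = ∑ i, ∑ j ∈ univ.erase i, |x i| * |x j| := by
    simp only [sum_erase_eq_sub (mem_univ _), sum_sub_distrib, sq, sum_mul_sum, abs_mul_abs_self]
  rw [hoffDiag, habs, mul_sum]
  refine (abs_sum_le_sum_abs _ _).trans (sum_le_sum fun i _ => ?_)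
  rw [mul_sum]
  refine (abs_sum_le_sum_abs _ _).trans (sum_le_sum fun j hj => ?_)
  rw [abs_mul, abs_mul, mul_comm μ]
  exact mul_le_mul_of_nonneg_left (hoff i j (ne_of_mem_erase hj).symm) (by positivity)

lemma sq_sum_abs_le_card_support_mul_sum_sq (x : ι → ℝ) :
    (∑ i, |x i|) ^ 2 ≤ #{i | x i ≠ 0} * ∑ i, x i ^ 2 := by
  have hsupp : ∀ f : ℝ → ℝ, f 0 = 0 → ∑ i with x i ≠ 0, f (x i) = ∑ i, f (x i) :=
    fun f hf => sum_filter_of_ne fun i _ hi h => hi (by rw [h, hf])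
  rw [← hsupp _ abs_zero, ← hsupp (· ^ 2) (zero_pow two_ne_zero)]
  simpa only [sq_abs] using sq_sum_le_card_mul_sum_sq (s := {i | x i ≠ 0}) (f := fun i => |x i|)

end QuadraticForm

theorem rip_from_coherence_general {m M : ℕ} (Φ : Matrix (Fin m) (Fin M) ℝ) (k : ℕ)
    (hunit : ∀ i, ∑ l, Φ l i * Φ l i = 1)
    (x : Fin M → ℝ)
    (hsparse : (Finset.univ.filter fun i => x i ≠ 0).card ≤ k) :
    (1 - ((k : ℝ) - 1) * coherence Φ) * ∑ i, x i ^ 2 ≤ ∑ l, (Φ.mulVec x l) ^ 2 ∧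
    ∑ l, (Φ.mulVec x l) ^ 2 ≤ (1 + ((k : ℝ) - 1) * coherence Φ) * ∑ i, x i ^ 2 := by
  set μ := coherence Φ
  set Q := ∑ i, x i ^ 2
  have hgram : |∑ l, (Φ *ᵥ x) l ^ 2 - Q| ≤ μ * ((∑ i, |x i|) ^ 2 - Q) := by
    rw [sum_mulVec_sq_eq_sum_gram]
    exact abs_quadForm_sub_sum_sq_le _ x hunit fun i j h => abs_gram_le_coherence Φ h
  have hcs : (∑ i, |x i|) ^ 2 - Q ≤ ((k : ℝ) - 1) * Q :=
    calc (∑ i, |x i|) ^ 2 - Q ≤ #{i | x i ≠ 0} * Q - Q := by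
          gcongr; exact sq_sum_abs_le_card_support_mul_sum_sq x
      _ ≤ k * Q - Q := by gcongr
      _ = ((k : ℝ) - 1) * Q := by ring
  have hbound : |∑ l, (Φ *ᵥ x) l ^ 2 - Q| ≤ ((k : ℝ) - 1) * μ * Q := by
    rw [mul_comm _ μ, mul_assoc]
    exact hgram.trans (mul_le_mul_of_nonneg_left hcs (coherence_nonneg Φ))
  constructor <;> linarith [abs_le.mp hbound]

/-- If `Φ` has unit-norm columns and coherence `μ`, then `Φ` satisfies RIP of
order `k` with constant `δ_k = (k-1)μ`. -/
theorem rip_from_coherence {m M : ℕ} (Φ : Matrix (Fin m) (Fin M) ℝ) (k : ℕ)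
    (hunit : ∀ i, ∑ l, Φ l i * Φ l i = 1)
    (hδ : ((k : ℝ) - 1) * coherence Φ < 1)
    (x : Fin M → ℝ)
    (hsparse : (Finset.univ.filter fun i => x i ≠ 0).card ≤ k) :
    (1 - ((k : ℝ) - 1) * coherence Φ) * ∑ i, x i ^ 2 ≤ ∑ l, (Φ.mulVec x l) ^ 2 ∧
    ∑ l, (Φ.mulVec x l) ^ 2 ≤ (1 + ((k : ℝ) - 1) * coherence Φ) * ∑ i, x i ^ 2 :=
  rip_from_coherence_general Φ k hunit x hsparse
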